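/- arXiv:1503.00265 — 2 statements merged into one kernel-verified Lean document; each statement's English description precedes it below -/
import Mathlib

section
/- Let N and K be positive integers with N ≥ K, and let M be a real number with 0 ≤ M ≤ N. Then max_{s ∈ {1,…,K}} ( s − (s/⌊N/s⌋)·M ) ≥ (1/12) · K(1 − M/N)/(1 + K·M/N). -/
lemma nat_div_half (N s : ℕ) (h1 : 1 ≤ s) (h2 : s ≤ N) :
    (N : ℝ) ≤ 2 * s * ((N / s : ℕ) : ℝ) := by
  have hq1 : 1 ≤ N / s := (Nat.one_le_div_iff (by omega)).2 h2
  have hdm := Nat.div_add_mod N s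
  have hml : N % s < s := Nat.mod_lt N (by omega)
  have h : N ≤ 2 * s * (N / s) := by nlinarith
  exact_mod_cast h

set_option maxHeartbeats 1000000 in
/-- The cut-set lower bound `max_{s ∈ {1,…,K}} (s - (s/⌊N/s⌋)M)` is within a factor `12`
of the single-server coded caching delay `K(1 - M/N)/(1 + KM/N)`. -/
theorem cutset_gap_twelve (N K : ℕ) (hK : 0 < K) (hNK : K ≤ N)
    (M : ℝ) (hM0 : 0 ≤ M) (hMN : M ≤ (N : ℝ)) :
    (1 / 12) * ((K : ℝ) * (1 - M / (N : ℝ)) / (1 + (K : ℝ) * M / (N : ℝ))) ≤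
      (Finset.Icc 1 K).sup' (Finset.nonempty_Icc.2 hK)
        (fun s => (s : ℝ) - ((s : ℝ) / ((N / s : ℕ) : ℝ)) * M) := by
  have hN0 : 0 < N := lt_of_lt_of_le hK hNK
  have hNr : (0:ℝ) < N := by exact_mod_cast hN0
  obtain ⟨a, ha⟩ : ∃ a : ℝ, a = M / N := ⟨_, rfl⟩
  have ha0 : 0 ≤ a := ha ▸ div_nonneg hM0 hNr.le
  have ha1 : a ≤ 1 := ha ▸ (div_le_one hNr).2 hMN
  have hKr : (1:ℝ) ≤ K := by exact_mod_cast hK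
  have hKa : (K:ℝ) * M / N = (K:ℝ) * a := by rw [ha]; ring
  have hMa : M / (N:ℝ) = a := ha.symm
  have hden : (0:ℝ) < 1 + (K:ℝ) * a := by nlinarith
  rw [hMa, hKa]
  -- key bound: f s ≥ s - 2 s² a
  have key : ∀ s : ℕ, 1 ≤ s → s ≤ K →
      (s:ℝ) - 2 * (s:ℝ)^2 * a ≤ (s:ℝ) - ((s:ℝ) / ((N / s : ℕ) : ℝ)) * M := by
    intro s hs1 hsK
    have hsr : (1:ℝ) ≤ s := by exact_mod_cast hs1
    have hq := nat_div_half N s hs1 (hsK.trans hNK)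
    have hq1 : 1 ≤ N / s := (Nat.one_le_div_iff (by omega)).2 (hsK.trans hNK)
    have hqr : (1:ℝ) ≤ ((N / s : ℕ) : ℝ) := by exact_mod_cast hq1
    have hqpos : (0:ℝ) < ((N / s : ℕ) : ℝ) := by linarith
    have hdiv : (s:ℝ) / ((N / s : ℕ) : ℝ) ≤ 2 * (s:ℝ)^2 / N := by
      rw [div_le_div_iff₀ hqpos hNr]
      nlinarith
    have hmul : ((s:ℝ) / ((N / s : ℕ) : ℝ)) * M ≤ (2 * (s:ℝ)^2 / N) * M :=
      mul_le_mul_of_nonneg_right hdiv hM0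
    have : (2 * (s:ℝ)^2 / N) * M = 2 * (s:ℝ)^2 * a := by
      rw [ha]; field_simp
    rw [this] at hmul; linarith
  have hmemK : K ∈ Finset.Icc 1 K := Finset.mem_Icc.2 ⟨hK, le_refl K⟩
  rcases le_or_gt (4 * (K:ℝ) * a) 1 with hA | hA
  · -- case A: s = K
    refine le_trans ?_ (Finset.le_sup' _ hmemK)
    refine le_trans ?_ (key K hK le_rfl)
    have h1 : (K:ℝ) * (1 - a) / (1 + (K:ℝ) * a) ≤ K := by
      rw [div_le_iff₀ hden]
      nlinarith [mul_nonneg (by linarith : (0:ℝ) ≤ (K:ℝ)) ha0,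
        mul_nonneg (mul_nonneg (by linarith : (0:ℝ) ≤ (K:ℝ)) (by linarith : (0:ℝ) ≤ (K:ℝ))) ha0]
    nlinarith [mul_nonneg (by linarith : (0:ℝ) ≤ (K:ℝ)) (by linarith : (0:ℝ) ≤ 1 - 4*(K:ℝ)*a)]
  · have hapos : 0 < a := by nlinarith
    rcases le_or_gt 1 (8 * a) with hB | hC
    · -- case B: s = 1
      have hmem1 : 1 ∈ Finset.Icc 1 K := Finset.mem_Icc.2 ⟨le_rfl, hK⟩
      refine le_trans ?_ (Finset.le_sup' _ hmem1)
      have hdone : ((1:ℕ):ℝ) - ((1:ℕ):ℝ) / ((N / 1 : ℕ) : ℝ) * M = 1 - a := by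
        rw [Nat.div_one, ha]
        field_simp; simp
      rw [hdone]
      have h1 : (K:ℝ) * (1 - a) / (1 + (K:ℝ) * a) ≤ 8 * (1 - a) := by
        rw [div_le_iff₀ hden]
        nlinarith [mul_nonneg (mul_nonneg (by linarith : (0:ℝ) ≤ 1 - a)
          (by linarith : (0:ℝ) ≤ 8*a - 1)) (by linarith : (0:ℝ) ≤ (K:ℝ))]
      linarith
    · -- case C: s = ⌈1/(4a)⌉
      obtain ⟨x, hx⟩ : ∃ x : ℝ, x = 1 / (4 * a) := ⟨_, rfl⟩
      have hxpos : 0 < x := by rw [hx]; positivity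
      have hx2 : 2 ≤ x := by
        rw [hx, le_div_iff₀ (by linarith : (0:ℝ) < 4 * a)]
        linarith
      have hxK : x ≤ K := by
        rw [hx, div_le_iff₀ (by linarith : (0:ℝ) < 4 * a)]
        nlinarith
      obtain ⟨s, hs⟩ : ∃ s : ℕ, s = ⌈x⌉₊ := ⟨_, rfl⟩
      have hs1 : 1 ≤ s := by
        rw [hs]
        exact Nat.one_le_ceil_iff.2 hxpos
      have hsK : s ≤ K := hs ▸ Nat.ceil_le.2 hxK
      have hsl : x ≤ (s:ℝ) := hs ▸ Nat.le_ceil x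
      have hsu : (s:ℝ) ≤ x + 1 := by
        have h := Nat.ceil_lt_add_one hxpos.le
        rw [hs]; linarith
      have hmem : s ∈ Finset.Icc 1 K := Finset.mem_Icc.2 ⟨hs1, hsK⟩
      refine le_trans ?_ (Finset.le_sup' _ hmem)
      refine le_trans ?_ (key s hs1 hsK)
      -- R ≤ 1/(12a) ≤ s - 2s²a
      have h1 : (K:ℝ) * (1 - a) / (1 + (K:ℝ) * a) ≤ 1 / a := by
        rw [div_le_div_iff₀ hden hapos]
        nlinarith
      have hax : 4 * a * x = 1 := by
        rw [hx]; field_simp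
      have h4as : 1 ≤ 4 * a * (s:ℝ) := by
        have h := mul_le_mul_of_nonneg_left hsl (by linarith : (0:ℝ) ≤ 4 * a)
        linarith
      have h4as' : 4 * a * (s:ℝ) ≤ 1 + 4 * a := by
        have h := mul_le_mul_of_nonneg_left hsu (by linarith : (0:ℝ) ≤ 4 * a)
        have e : 4 * a * (x + 1) = 1 + 4 * a := by linarith [hax]
        linarith [e ▸ h]
      have ha8 : a < 1/8 := by linarith
      have P1 : (0:ℝ) ≤ (4*a*(s:ℝ) - 1) * (1 + 4*a - 4*a*(s:ℝ)) :=
        mul_nonneg (by linarith) (by linarith)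
      have P2 : (0:ℝ) ≤ a * (1 + 4*a - 4*a*(s:ℝ)) :=
        mul_nonneg hapos.le (by linarith)
      have P3 : (0:ℝ) ≤ (1/8 - a) * (1/8 + a) :=
        mul_nonneg (by linarith) (by linarith)
      have h2 : 1 / (12 * a) ≤ (s:ℝ) - 2 * (s:ℝ)^2 * a := by
        rw [div_le_iff₀ (by linarith : (0:ℝ) < 12 * a)]
        nlinarith [P1, P2, P3]
      have h3 : (1/12 : ℝ) * ((K:ℝ) * (1 - a) / (1 + (K:ℝ) * a)) ≤ 1 / (12 * a) := by
        have := mul_le_mul_of_nonneg_left h1 (by norm_num : (0:ℝ) ≤ 1/12)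
        calc (1/12 : ℝ) * ((K:ℝ) * (1 - a) / (1 + (K:ℝ) * a)) ≤ (1/12) * (1/a) := this
          _ = 1 / (12 * a) := by ring
      linarith
end

section
/- Let ℓ be a positive integer. Then, in ℚ, (∑_{i=1}^{ℓ} C(ℓ, i) · C(2ℓ² − ℓ, ℓ − i)) / C(2ℓ², ℓ) ≥ 1 − (1 − 1/(2ℓ))^{ℓ}, where C(n,k) denotes the binomial coefficient. -/
/-!
Splitting Vandermonde's identity `C(ℓ + M, ℓ) = ∑ᵢ C(ℓ, i) C(M, ℓ - i)` at `i = 0` shows that the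
fraction equals `1 - C(M, ℓ) / C(2ℓ², ℓ)` with `M = 2ℓ² - ℓ`. Writing both binomials as falling
factorials, `C(M, ℓ) / C(2ℓ², ℓ) = ∏_{j < ℓ} (M - j) / (2ℓ² - j)`, and each factor is at most
`M / 2ℓ² = 1 - 1/(2ℓ)`.
-/

open Finset

namespace Nat

theorem sub_mul_le_sub_mul_of_le {a n : ℕ} (j : ℕ) (h : a ≤ n) : (a - j) * n ≤ (n - j) * a := by
  rw [Nat.sub_mul, Nat.sub_mul, Nat.mul_comm n a]
  exact Nat.sub_le_sub_left (Nat.mul_le_mul_left j h) _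

theorem descFactorial_mul_pow_le {a n : ℕ} (h : a ≤ n) (k : ℕ) :
    a.descFactorial k * n ^ k ≤ n.descFactorial k * a ^ k := by
  induction k with
  | zero => simp
  | succ k ih =>
    calc a.descFactorial (k + 1) * n ^ (k + 1)
        = ((a - k) * n) * (a.descFactorial k * n ^ k) := by
          rw [descFactorial_succ, pow_succ]; ring
      _ ≤ ((n - k) * a) * (n.descFactorial k * a ^ k) :=
          Nat.mul_le_mul (sub_mul_le_sub_mul_of_le k h) ih
      _ = n.descFactorial (k + 1) * a ^ (k + 1) := by
          rw [descFactorial_succ, pow_succ]; ring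

theorem choose_mul_pow_le {a n : ℕ} (h : a ≤ n) (k : ℕ) :
    a.choose k * n ^ k ≤ n.choose k * a ^ k := by
  have := descFactorial_mul_pow_le h k
  rw [descFactorial_eq_factorial_mul_choose, descFactorial_eq_factorial_mul_choose,
    Nat.mul_assoc, Nat.mul_assoc] at this
  exact Nat.le_of_mul_le_mul_left this k.factorial_pos

theorem choose_div_choose_le_div_pow {K : Type*} [Field K] [LinearOrder K] [IsStrictOrderedRing K]
    {a n : ℕ} (h : a ≤ n) (k : ℕ) :
    (a.choose k : K) / n.choose k ≤ ((a : K) / n) ^ k := by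
  rcases Nat.eq_zero_or_pos n with rfl | hn
  · obtain rfl : a = 0 := Nat.le_zero.mp h
    rcases k with _ | k <;> simp
  rcases Nat.eq_zero_or_pos (n.choose k) with hC | hC
  · rw [hC, Nat.cast_zero, div_zero]
    positivity
  rw [div_pow, div_le_div_iff₀ (by exact_mod_cast hC) (by positivity), mul_comm _ (n.choose k : K)]
  exact_mod_cast choose_mul_pow_le h k

theorem sum_Icc_choose_mul_choose_add_choose (m a k : ℕ) :
    ∑ i ∈ Icc 1 k, m.choose i * a.choose (k - i) + a.choose k = (m + a).choose k := by
  rw [add_choose_eq, Finset.Nat.sum_antidiagonal_eq_sum_range_succ_mk, range_succ_eq_Icc_zero,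
    ← insert_Icc_add_one_left_eq_Icc k.zero_le, sum_insert (by simp)]
  simp [add_comm]

end Nat

/-- Packet-routing bound of Example 3: for a positive integer `ℓ`,
`(∑_{i=1}^ℓ C(ℓ,i) C(2ℓ²-ℓ, ℓ-i)) / C(2ℓ², ℓ) ≥ 1 - (1 - 1/(2ℓ))^ℓ` in `ℚ`. -/
theorem routing_fraction_bound (ℓ : ℕ) (hℓ : 0 < ℓ) :
    1 - (1 - 1 / (2 * (ℓ : ℚ))) ^ ℓ ≤
      (∑ i ∈ Finset.Icc 1 ℓ,
          ((ℓ.choose i * (2 * ℓ ^ 2 - ℓ).choose (ℓ - i) : ℕ) : ℚ)) /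
        (((2 * ℓ ^ 2).choose ℓ : ℕ) : ℚ) := by
  have hℓN : ℓ ≤ 2 * ℓ ^ 2 := by nlinarith
  have hsum : (∑ i ∈ Icc 1 ℓ, ((ℓ.choose i * (2 * ℓ ^ 2 - ℓ).choose (ℓ - i) : ℕ) : ℚ)) =
      ((2 * ℓ ^ 2).choose ℓ : ℕ) - ((2 * ℓ ^ 2 - ℓ).choose ℓ : ℕ) := by
    rw [← Nat.cast_sum, eq_sub_iff_add_eq, ← Nat.cast_add, Nat.sum_Icc_choose_mul_choose_add_choose,
      Nat.add_sub_cancel' hℓN]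
  have hfactor : 1 - 1 / (2 * (ℓ : ℚ)) = ((2 * ℓ ^ 2 - ℓ : ℕ) : ℚ) / (2 * ℓ ^ 2 : ℕ) := by
    rw [Nat.cast_sub hℓN]
    field_simp
    push_cast
    ring
  have hC : (((2 * ℓ ^ 2).choose ℓ : ℕ) : ℚ) ≠ 0 := by exact_mod_cast (Nat.choose_pos hℓN).ne'
  rw [hsum, sub_div, div_self hC, hfactor]
  exact sub_le_sub_left (Nat.choose_div_choose_le_div_pow (Nat.sub_le _ _) ℓ) 1
end
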